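/- arXiv:2203.07469 — 7 statements merged into one kernel-verified Lean document; each statement's English description precedes it below -/
import Mathlib

section
/- A finite quantum score S on Dens(n) is truthful if and only if there exist a convex function F : Dens(n) → ℝ and, for each ρ' ∈ Dens(n), a Hermitian matrix d_{ρ'} that is a subgradient of F at ρ', such that S(ρ'; ρ) = F(ρ') + ⟨d_{ρ'}, ρ − ρ'⟩ for all ρ, ρ' ∈ Dens(n). Moreover, S is strictly truthful if and only if such an F can be chosen strictly convex on Dens(n). -/
open Matrix BigOperators ComplexOrder

noncomputable section

/-- The space of `n × n` complex matrices. -/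
abbrev Mat (n : ℕ) := Matrix (Fin n) (Fin n) ℂ

/-- The set of density matrices on ℂⁿ: positive semidefinite with trace 1. -/
def Dens (n : ℕ) : Set (Mat n) := {ρ | ρ.PosSemidef ∧ ρ.trace = 1}

/-- Real inner product on (Hermitian) matrices: ⟨A,B⟩ = Tr(AB) (real part). -/
def hip {n : ℕ} (A B : Mat n) : ℝ := ((A * B).trace).re

/-- A POVM with finite outcome set `Y`. -/
def IsPOVM {n : ℕ} {Y : Type*} [Fintype Y] (μ : Y → Mat n) : Prop :=
  (∀ y, (μ y).PosSemidef) ∧ ∑ y, μ y = 1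

/-- A projection-valued measurement. -/
def IsPVM {n : ℕ} {Y : Type*} [Fintype Y] (μ : Y → Mat n) : Prop :=
  IsPOVM μ ∧ (∀ y, (μ y).IsHermitian ∧ μ y * μ y = μ y) ∧
    ∀ y y', y ≠ y' → μ y * μ y' = 0

/-- Expected score of a quantum score with report type `R`. -/
def expScoreR {n : ℕ} {R : Type*} {Y : Type*} [Fintype Y]
    (s : R → Y → ℝ) (μ : R → Y → Mat n) (r : R) (ρ : Mat n) : ℝ :=
  ∑ y, hip (μ r y) ρ * s r y

/-- Truthfulness of a quantum score. -/
def Truthful {n : ℕ} {Y : Type*} [Fintype Y]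
    (s : Mat n → Y → ℝ) (μ : Mat n → Y → Mat n) : Prop :=
  ∀ ρ ∈ Dens n, ∀ ρ' ∈ Dens n, expScoreR s μ ρ' ρ ≤ expScoreR s μ ρ ρ

/-- Strict truthfulness of a quantum score. -/
def StrictlyTruthful {n : ℕ} {Y : Type*} [Fintype Y]
    (s : Mat n → Y → ℝ) (μ : Mat n → Y → Mat n) : Prop :=
  Truthful s μ ∧ ∀ ρ ∈ Dens n, ∀ ρ' ∈ Dens n,
    expScoreR s μ ρ' ρ = expScoreR s μ ρ ρ → ρ' = ρ

/-- `d` is a (Hermitian-matrix) subgradient of `F` at `ρ` relative to `Dens n`. -/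
def IsQSubgrad {n : ℕ} (F : Mat n → ℝ) (ρ d : Mat n) : Prop :=
  ∀ τ ∈ Dens n, F ρ + hip d (τ - ρ) ≤ F τ

/-- `d` is a subgradient of `f` at `p` relative to `P ⊆ ℝ^Y`. -/
def IsCSubgrad {Y : Type*} [Fintype Y] (P : Set (Y → ℝ)) (f : (Y → ℝ) → ℝ)
    (p d : Y → ℝ) : Prop :=
  ∀ q ∈ P, f p + ∑ y, d y * (q y - p y) ≤ f q

/-- A POVM is tomographically complete if the real span of its elements is
the set of Hermitian matrices. -/
def TomoComplete {n : ℕ} {Y : Type*} [Fintype Y] (μ : Y → Mat n) : Prop :=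
  ∀ X : Mat n, X.IsHermitian ↔ X ∈ Submodule.span ℝ (Set.range μ)

/-- The eigenvalues of a Hermitian matrix, in non-increasing order
(junk value `0` on non-Hermitian matrices). -/
def eigs {n : ℕ} (ρ : Mat n) : Fin n → ℝ :=
  if h : ρ.IsHermitian then
    fun i => (h.eigenvalues ∘ (Tuple.sort h.eigenvalues)) i.rev
  else 0

/-- The outer product `v v*`. -/
def outer {n : ℕ} (v : Fin n → ℂ) : Mat n := Matrix.vecMulVec v (star v)

/-- A family of orthonormal vectors in ℂⁿ. -/
def ONFam {n k : ℕ} (x : Fin k → Fin n → ℂ) : Prop :=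
  ∀ i j, ∑ m, (starRingEnd ℂ) (x i m) * x j m = if i = j then 1 else 0

/-- `x` is a spectral decomposition of `ρ` (with eigenvalues in non-increasing
order `eigs ρ`). -/
def IsSpecDecomp {n : ℕ} (ρ : Mat n) (x : Fin n → Fin n → ℂ) : Prop :=
  ONFam x ∧ ρ = ∑ y, (eigs ρ y : ℂ) • outer (x y)

/-- Expected classical score `ŝ(q; p)`. -/
def cExp {n : ℕ} (s : (Fin n → ℝ) → Fin n → ℝ) (q p : Fin n → ℝ) : ℝ :=
  ∑ y, p y * s q y

/-- Properness of a classical scoring rule. -/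
def Proper {n : ℕ} (s : (Fin n → ℝ) → Fin n → ℝ) : Prop :=
  ∀ p ∈ stdSimplex ℝ (Fin n), ∀ q ∈ stdSimplex ℝ (Fin n), cExp s q p ≤ cExp s p p

/-- Strict properness of a classical scoring rule. -/
def StrictlyProper {n : ℕ} (s : (Fin n → ℝ) → Fin n → ℝ) : Prop :=
  Proper s ∧ ∀ p ∈ stdSimplex ℝ (Fin n), ∀ q ∈ stdSimplex ℝ (Fin n),
    cExp s q p = cExp s p p → q = p

/-- Permutation invariance of a classical scoring rule: `ŝ(p, y) = ŝ(πp, π y)`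
where `(πp)_y = p_{π y}`. -/
def PermInv {n : ℕ} (s : (Fin n → ℝ) → Fin n → ℝ) : Prop :=
  ∀ (π : Equiv.Perm (Fin n)) (p : Fin n → ℝ) (y : Fin n), s p y = s (p ∘ π) (π y)

/-- Expected spectral score `S[ŝ](ρ'; ρ)` computed using the spectral
decomposition `x` of the report `ρ'`. -/
def specExp {n : ℕ} (s : (Fin n → ℝ) → Fin n → ℝ) (x : Fin n → Fin n → ℂ)
    (ρ' ρ : Mat n) : ℝ :=
  ∑ y, hip (outer (x y)) ρ * s (eigs ρ') y

/-- Truthfulness of the spectral score `S[ŝ]`. -/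
def SpecTruthful {n : ℕ} (s : (Fin n → ℝ) → Fin n → ℝ) : Prop :=
  ∀ ρ ∈ Dens n, ∀ ρ' ∈ Dens n, ∀ x z, IsSpecDecomp ρ' x → IsSpecDecomp ρ z →
    specExp s x ρ' ρ ≤ specExp s z ρ ρ

/-- Strict truthfulness of the spectral score `S[ŝ]`. -/
def SpecStrictlyTruthful {n : ℕ} (s : (Fin n → ℝ) → Fin n → ℝ) : Prop :=
  SpecTruthful s ∧ ∀ ρ ∈ Dens n, ∀ ρ' ∈ Dens n, ∀ x z,
    IsSpecDecomp ρ' x → IsSpecDecomp ρ z →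
    specExp s x ρ' ρ = specExp s z ρ ρ → ρ' = ρ

/-- Elicitability of a property of density matrices by a quantum score. -/
def ElicitableProp {n : ℕ} {R : Type*} (Γ : Mat n → R) : Prop :=
  ∃ (m : ℕ) (s : R → Fin m → ℝ) (μ : R → Fin m → Mat n),
    (∀ r, IsPOVM (μ r)) ∧
    ∀ ρ ∈ Dens n, ∀ r, (∀ r', expScoreR s μ r' ρ ≤ expScoreR s μ r ρ) ↔ r = Γ ρ

/-- Identifiability of an ℝᵏ-valued property of density matrices. -/
def IdentifiableProp {n k : ℕ} (Γ : Mat n → (Fin k → ℝ)) : Prop :=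
  ∃ V : (Fin k → ℝ) → Fin k → Mat n,
    ∀ r ∈ Γ '' (Dens n), (∀ i, (V r i).IsHermitian) ∧
      ∀ ρ ∈ Dens n, (Γ ρ = r ↔ ∀ i, hip (V r i) ρ = 0)

/-- `Γ` is `k`-elicitable. -/
def KElicitable {n : ℕ} {R : Type*} (k : ℕ) (Γ : Mat n → R) : Prop :=
  ∃ (Γh : Mat n → (Fin k → ℝ)) (ψ : (Fin k → ℝ) → R),
    ElicitableProp Γh ∧ IdentifiableProp Γh ∧ ∀ ρ ∈ Dens n, Γ ρ = ψ (Γh ρ)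

end

/-! The expected score `S(ρ'; ρ)` is the real-linear function `ρ ↦ ⟨D(ρ'), ρ⟩` with
`D(ρ') = ∑_y s(ρ', y) μ(ρ')_y` (`scoreMatrix`), so every score is represented by
`F(ρ) = S(ρ; ρ)` and `d = D`, and truthfulness says exactly that `D(ρ')` is a subgradient of `F`
at `ρ'`. Then `F` is the pointwise maximum of the affine functions `S(ρ'; ·)`, hence convex, and
strictly convex when the maximum is attained only at `ρ' = ρ`. Conversely, a subgradient
inequality that is strict off the base point (as it is for strictly convex `F`) gives (strict)
truthfulness. -/

section Hip

variable {n : ℕ}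

lemma hip_add_right (A B C : Mat n) : hip A (B + C) = hip A B + hip A C := by
  simp [hip, mul_add, Complex.add_re]

lemma hip_sub_right (A B C : Mat n) : hip A (B - C) = hip A B - hip A C := by
  simp [hip, mul_sub, Complex.sub_re]

lemma hip_smul_right (c : ℝ) (A B : Mat n) : hip A (c • B) = c * hip A B := by
  simp [hip, Matrix.trace_smul, Complex.real_smul]

lemma hip_smul_left (c : ℝ) (A B : Mat n) : hip (c • A) B = c * hip A B := by
  simp [hip, Matrix.trace_smul, Complex.real_smul]

lemma hip_sum_left {Y : Type*} [Fintype Y] (f : Y → Mat n) (B : Mat n) :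
    hip (∑ y, f y) B = ∑ y, hip (f y) B := by
  simp [hip, Finset.sum_mul, Matrix.trace_sum, Complex.re_sum]

end Hip

lemma convex_dens (n : ℕ) : Convex ℝ (Dens n) := by
  rintro ρ ⟨hρ, hρ_tr⟩ τ ⟨hτ, hτ_tr⟩ a b ha hb hab
  refine ⟨(hρ.smul ha).add (hτ.smul hb), ?_⟩
  rw [Matrix.trace_add, Matrix.trace_smul, Matrix.trace_smul, hρ_tr, hτ_tr]
  simp [Complex.real_smul, ← Complex.ofReal_add, hab]

section ScoreMatrix

variable {n : ℕ} {R Y : Type*} [Fintype Y]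

noncomputable def scoreMatrix (s : R → Y → ℝ) (μ : R → Y → Mat n) (r : R) : Mat n :=
  ∑ y, s r y • μ r y

lemma expScoreR_eq_hip_scoreMatrix (s : R → Y → ℝ) (μ : R → Y → Mat n) (r : R) (ρ : Mat n) :
    expScoreR s μ r ρ = hip (scoreMatrix s μ r) ρ := by
  simp only [expScoreR, scoreMatrix, hip_sum_left, hip_smul_left, mul_comm]

lemma isHermitian_scoreMatrix {s : R → Y → ℝ} {μ : R → Y → Mat n} {r : R}
    (hμ : ∀ y, (μ r y).IsHermitian) : (scoreMatrix s μ r).IsHermitian :=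
  isSelfAdjoint_sum _ fun y _ => (hμ y).smul (IsSelfAdjoint.all (s r y))

lemma expScoreR_combo (s : R → Y → ℝ) (μ : R → Y → Mat n) (r : R) (ρ τ : Mat n) (a b : ℝ) :
    expScoreR s μ r (a • ρ + b • τ) = a * expScoreR s μ r ρ + b * expScoreR s μ r τ := by
  simp only [expScoreR_eq_hip_scoreMatrix, hip_add_right, hip_smul_right]

lemma expScoreR_eq_self_add_hip (s : Mat n → Y → ℝ) (μ : Mat n → Y → Mat n) (ρ' ρ : Mat n) :
    expScoreR s μ ρ' ρ = expScoreR s μ ρ' ρ' + hip (scoreMatrix s μ ρ') (ρ - ρ') := by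
  rw [hip_sub_right, ← expScoreR_eq_hip_scoreMatrix, ← expScoreR_eq_hip_scoreMatrix]
  ring

end ScoreMatrix

section Truthful

variable {n : ℕ} {Y : Type*} [Fintype Y] {s : Mat n → Y → ℝ} {μ : Mat n → Y → Mat n}

lemma StrictlyTruthful.expScoreR_lt (h : StrictlyTruthful s μ) {ρ ρ' : Mat n}
    (hρ : ρ ∈ Dens n) (hρ' : ρ' ∈ Dens n) (hne : ρ' ≠ ρ) :
    expScoreR s μ ρ' ρ < expScoreR s μ ρ ρ :=
  lt_of_le_of_ne (h.1 ρ hρ ρ' hρ') fun heq => hne (h.2 ρ hρ ρ' hρ' heq)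

lemma Truthful.isQSubgrad (h : Truthful s μ) {ρ' : Mat n} (hρ' : ρ' ∈ Dens n) :
    IsQSubgrad (fun ρ => expScoreR s μ ρ ρ) ρ' (scoreMatrix s μ ρ') := fun τ hτ => by
  simpa only [← expScoreR_eq_self_add_hip] using h τ hτ ρ' hρ'

lemma Truthful.convexOn (h : Truthful s μ) :
    ConvexOn ℝ (Dens n) fun ρ => expScoreR s μ ρ ρ := by
  refine ⟨convex_dens n, fun ρ hρ τ hτ a b ha hb hab => ?_⟩
  have hσ : a • ρ + b • τ ∈ Dens n := convex_dens n hρ hτ ha hb hab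
  calc expScoreR s μ (a • ρ + b • τ) (a • ρ + b • τ)
      = a * expScoreR s μ (a • ρ + b • τ) ρ + b * expScoreR s μ (a • ρ + b • τ) τ :=
        expScoreR_combo s μ _ ρ τ a b
    _ ≤ a * expScoreR s μ ρ ρ + b * expScoreR s μ τ τ := by
        gcongr
        exacts [h ρ hρ _ hσ, h τ hτ _ hσ]

lemma StrictlyTruthful.strictConvexOn (h : StrictlyTruthful s μ) :
    StrictConvexOn ℝ (Dens n) fun ρ => expScoreR s μ ρ ρ := by
  refine ⟨convex_dens n, fun ρ hρ τ hτ hρτ a b ha hb hab => ?_⟩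
  have hσ : a • ρ + b • τ ∈ Dens n := convex_dens n hρ hτ ha.le hb.le hab
  have hσρ : a • ρ + b • τ ≠ ρ := by
    rw [Convex.combo_eq_smul_sub_add hab, Ne, add_eq_right, smul_eq_zero, sub_eq_zero, not_or]
    exact ⟨hb.ne', hρτ.symm⟩
  calc expScoreR s μ (a • ρ + b • τ) (a • ρ + b • τ)
      = a * expScoreR s μ (a • ρ + b • τ) ρ + b * expScoreR s μ (a • ρ + b • τ) τ :=
        expScoreR_combo s μ _ ρ τ a b
    _ < a * expScoreR s μ ρ ρ + b * expScoreR s μ τ τ :=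
        add_lt_add_of_lt_of_le (mul_lt_mul_of_pos_left (h.expScoreR_lt hρ hσ hσρ) ha)
          (mul_le_mul_of_nonneg_left (h.1 τ hτ _ hσ) hb.le)

lemma IsQSubgrad.lt_of_strictConvexOn {F : Mat n → ℝ} {ρ' ρ d : Mat n}
    (hF : StrictConvexOn ℝ (Dens n) F) (hd : IsQSubgrad F ρ' d)
    (hρ' : ρ' ∈ Dens n) (hρ : ρ ∈ Dens n) (hne : ρ' ≠ ρ) :
    F ρ' + hip d (ρ - ρ') < F ρ := by
  set m : Mat n := (1 / 2 : ℝ) • ρ' + (1 / 2 : ℝ) • ρ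
  have hm : m ∈ Dens n := convex_dens n hρ' hρ (by norm_num) (by norm_num) (by norm_num)
  have hm_sub : m - ρ' = (1 / 2 : ℝ) • (ρ - ρ') := by module
  have h_sub := hd m hm
  rw [hm_sub, hip_smul_right] at h_sub
  have h_mid : F m < (1 / 2 : ℝ) • F ρ' + (1 / 2 : ℝ) • F ρ :=
    hF.2 hρ' hρ hne (by norm_num) (by norm_num) (by norm_num)
  simp only [smul_eq_mul] at h_mid
  linarith

variable {F : Mat n → ℝ} {d : Mat n → Mat n}

lemma expScoreR_self_of_eq_add_hip
    (hrep : ∀ ρ' ∈ Dens n, ∀ ρ ∈ Dens n, expScoreR s μ ρ' ρ = F ρ' + hip (d ρ') (ρ - ρ'))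
    {ρ : Mat n} (hρ : ρ ∈ Dens n) : expScoreR s μ ρ ρ = F ρ := by
  rw [hrep ρ hρ ρ hρ, hip_sub_right, sub_self, add_zero]

lemma truthful_of_isQSubgrad (hd : ∀ ρ' ∈ Dens n, IsQSubgrad F ρ' (d ρ'))
    (hrep : ∀ ρ' ∈ Dens n, ∀ ρ ∈ Dens n, expScoreR s μ ρ' ρ = F ρ' + hip (d ρ') (ρ - ρ')) :
    Truthful s μ := fun ρ hρ ρ' hρ' => by
  rw [hrep ρ' hρ' ρ hρ, expScoreR_self_of_eq_add_hip hrep hρ]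
  exact hd ρ' hρ' ρ hρ

lemma strictlyTruthful_of_strictConvexOn (hF : StrictConvexOn ℝ (Dens n) F)
    (hd : ∀ ρ' ∈ Dens n, IsQSubgrad F ρ' (d ρ'))
    (hrep : ∀ ρ' ∈ Dens n, ∀ ρ ∈ Dens n, expScoreR s μ ρ' ρ = F ρ' + hip (d ρ') (ρ - ρ')) :
    StrictlyTruthful s μ := by
  refine ⟨truthful_of_isQSubgrad hd hrep, fun ρ hρ ρ' hρ' heq => ?_⟩
  by_contra hne
  rw [hrep ρ' hρ' ρ hρ, expScoreR_self_of_eq_add_hip hrep hρ] at heq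
  exact (hd ρ' hρ' |>.lt_of_strictConvexOn hF hρ' hρ hne).ne heq

end Truthful

/-- characterization of (strictly) truthful finite quantum scores. -/
theorem truthful_iff_convex_representation {n : ℕ} {Y : Type*} [Fintype Y]
    (s : Mat n → Y → ℝ) (μ : Mat n → Y → Mat n)
    (hμ : ∀ ρ' ∈ Dens n, IsPOVM (μ ρ')) :
    (Truthful s μ ↔
      ∃ (F : Mat n → ℝ) (d : Mat n → Mat n),
        ConvexOn ℝ (Dens n) F ∧
        (∀ ρ' ∈ Dens n, (d ρ').IsHermitian ∧ IsQSubgrad F ρ' (d ρ')) ∧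
        (∀ ρ' ∈ Dens n, ∀ ρ ∈ Dens n,
          expScoreR s μ ρ' ρ = F ρ' + hip (d ρ') (ρ - ρ'))) ∧
    (StrictlyTruthful s μ ↔
      ∃ (F : Mat n → ℝ) (d : Mat n → Mat n),
        StrictConvexOn ℝ (Dens n) F ∧
        (∀ ρ' ∈ Dens n, (d ρ').IsHermitian ∧ IsQSubgrad F ρ' (d ρ')) ∧
        (∀ ρ' ∈ Dens n, ∀ ρ ∈ Dens n,
          expScoreR s μ ρ' ρ = F ρ' + hip (d ρ') (ρ - ρ'))) := by
  have hherm : ∀ ρ' ∈ Dens n, (scoreMatrix s μ ρ').IsHermitian := fun ρ' hρ' =>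
    isHermitian_scoreMatrix fun y => ((hμ ρ' hρ').1 y).1
  have hrep : ∀ ρ' ∈ Dens n, ∀ ρ ∈ Dens n, expScoreR s μ ρ' ρ =
      expScoreR s μ ρ' ρ' + hip (scoreMatrix s μ ρ') (ρ - ρ') := fun ρ' _ ρ _ =>
    expScoreR_eq_self_add_hip s μ ρ' ρ
  refine ⟨⟨fun hT => ?_, fun ⟨F, d, _, hd, hr⟩ => ?_⟩, ⟨fun hS => ?_, fun ⟨F, d, hF, hd, hr⟩ => ?_⟩⟩
  · exact ⟨_, _, hT.convexOn, fun ρ' h => ⟨hherm ρ' h, hT.isQSubgrad h⟩, hrep⟩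
  · exact truthful_of_isQSubgrad (fun ρ' h => (hd ρ' h).2) hr
  · exact ⟨_, _, hS.strictConvexOn, fun ρ' h => ⟨hherm ρ' h, hS.1.isQSubgrad h⟩, hrep⟩
  · exact strictlyTruthful_of_strictConvexOn hF (fun ρ' h => (hd ρ' h).2) hr
end

section
/- Let μ◇ = (μ◇_y)_{y∈Y} be a POVM on ℂⁿ and let S = (s, μ◇) be a truthful finite quantum score whose measurement function is constantly equal to μ◇. If ρ, τ ∈ Dens(n) satisfy ⟨μ◇_y, ρ⟩ = ⟨μ◇_y, τ⟩ for all y ∈ Y, then S(ρ; ρ) = S(τ; τ). -/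
open Matrix BigOperators ComplexOrder

/-- for truthful fixed-measurement scores, the optimal expected
score only depends on the induced outcome distribution. -/
theorem fixed_meas_expected_score_depends_only_on_distribution
    {n : ℕ} {Y : Type*} [Fintype Y]
    (s : Mat n → Y → ℝ) (μd : Y → Mat n) (hμ : IsPOVM μd)
    (htruth : Truthful s (fun _ => μd))
    (ρ τ : Mat n) (hρ : ρ ∈ Dens n) (hτ : τ ∈ Dens n)
    (h : ∀ y, hip (μd y) ρ = hip (μd y) τ) :
    expScoreR s (fun _ => μd) ρ ρ = expScoreR s (fun _ => μd) τ τ := by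
  have key : ∀ r : Mat n, expScoreR s (fun _ => μd) r ρ = expScoreR s (fun _ => μd) r τ := by
    intro r; unfold expScoreR; simp only [h]
  have h1 := htruth ρ hρ τ hτ
  have h2 := htruth τ hτ ρ hρ
  rw [key τ] at h1
  rw [← key ρ] at h2
  linarith
end

section
/- Let μ◇ = (μ◇_y)_{y∈Y} be a tomographically complete POVM on ℂⁿ. Then for every finite quantum score S on Dens(n) there exists a scoring function s' : Dens(n) × Y → ℝ such that the fixed-measurement quantum score S◇ = (s', μ◇) satisfies S◇(ρ'; ρ) = S(ρ'; ρ) for all ρ, ρ' ∈ Dens(n), i.e., Σ_{y∈Y} ⟨μ◇_y, ρ⟩ s'(ρ', y) = S(ρ'; ρ). -/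
open Matrix BigOperators ComplexOrder

lemma hip_sum {n : ℕ} {ι : Type*} (t : Finset ι) (f : ι → Mat n) (B : Mat n) :
    hip (∑ i ∈ t, f i) B = ∑ i ∈ t, hip (f i) B := by
  simp [hip, Finset.sum_mul, Matrix.trace_sum, Complex.re_sum]

lemma hip_smul {n : ℕ} (c : ℝ) (A B : Mat n) : hip (c • A) B = c * hip A B := by
  simp [hip, smul_mul_assoc, Matrix.trace_smul, Complex.smul_re]

/-- fixed-measurement quantum scores with a tomographically
complete measurement can express every finite quantum score. -/
theorem fixed_meas_expressive {n : ℕ} {Y : Type*} [Fintype Y]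
    (μd : Y → Mat n) (hμ : IsPOVM μd) (htomo : TomoComplete μd)
    {Y' : Type*} [Fintype Y'] (s : Mat n → Y' → ℝ) (μ : Mat n → Y' → Mat n)
    (hμ' : ∀ ρ' ∈ Dens n, IsPOVM (μ ρ')) :
    ∃ s' : Mat n → Y → ℝ, ∀ ρ' ∈ Dens n, ∀ ρ ∈ Dens n,
      ∑ y, hip (μd y) ρ * s' ρ' y = expScoreR s μ ρ' ρ := by
  classical
  have key : ∀ ρ' ∈ Dens n, ∃ c : Y → ℝ,
      ∑ y, c y • μd y = ∑ y', s ρ' y' • μ ρ' y' := by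
    intro ρ' hρ'
    have hH : (∑ y', s ρ' y' • μ ρ' y' : Mat n).IsHermitian := by
      rw [Matrix.IsHermitian, Matrix.conjTranspose_sum]
      refine Finset.sum_congr rfl fun y' _ => ?_
      rw [Matrix.conjTranspose_smul, star_trivial, ((hμ' ρ' hρ').1 y').1]
    have := (htomo _).mp hH
    rwa [Submodule.mem_span_range_iff_exists_fun ℝ] at this
  refine ⟨fun ρ' y => if h : ρ' ∈ Dens n then (key ρ' h).choose y else 0, ?_⟩
  intro ρ' hρ' ρ hρ
  have hc := (key ρ' hρ').choose_spec
  calc ∑ y, hip (μd y) ρ * (if h : ρ' ∈ Dens n then (key ρ' h).choose y else 0)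
      = ∑ y, hip ((key ρ' hρ').choose y • μd y) ρ := by
        simp only [dif_pos hρ']
        refine Finset.sum_congr rfl fun y _ => ?_
        rw [hip_smul]; ring
    _ = hip (∑ y, (key ρ' hρ').choose y • μd y) ρ := (hip_sum _ _ _).symm
    _ = hip (∑ y', s ρ' y' • μ ρ' y') ρ := by rw [hc]
    _ = expScoreR s μ ρ' ρ := by
        rw [hip_sum]
        refine Finset.sum_congr rfl fun y' _ => ?_
        rw [hip_smul]; ring
end

section
/- For every finite quantum score S on Dens(n) there exists a projective finite quantum score S' = (s', μ') — i.e., one for which every μ'(ρ') is a projection-valued measurement, a POVM whose elements are pairwise orthogonal orthogonal projections — such that S'(ρ'; ρ) = S(ρ'; ρ) for all ρ, ρ' ∈ Dens(n). -/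
open Matrix BigOperators ComplexOrder

/-! The expected score is linear in the true state: `S(ρ'; ρ) = ⟨A, ρ⟩` for the Hermitian observable
`A = ∑_y s(ρ', y) μ(ρ')_y`. Writing `A = ∑_i λ_i P_i` with the rank-one eigenprojections `P_i = U Eᵢᵢ U*`
of a unitary diagonalization, the PVM `(P_i)` with scores `λ_i` has the same expected score. -/

open Unitary

section

variable {n : ℕ}

lemma hip_sum_smul {ι : Type*} [Fintype ι] (c : ι → ℝ) (A : ι → Mat n) (B : Mat n) :
    hip (∑ i, c i • A i) B = ∑ i, c i * hip (A i) B := by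
  simp [hip, Finset.sum_mul, trace_sum, Complex.re_sum]

lemma expScoreR_eq_hip {R Y : Type*} [Fintype Y] (s : R → Y → ℝ) (μ : R → Y → Mat n)
    (r : R) (ρ : Mat n) : expScoreR s μ r ρ = hip (∑ y, s r y • μ r y) ρ := by
  simp only [expScoreR, hip_sum_smul, mul_comm]

lemma IsPOVM.isHermitian_sum_smul {Y : Type*} [Fintype Y] {μ : Y → Mat n}
    (hμ : IsPOVM μ) (c : Y → ℝ) : (∑ y, c y • μ y).IsHermitian :=
  isSelfAdjoint_sum _ fun y _ => (hμ.1 y).1.smul (IsSelfAdjoint.all (c y))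

lemma isPVM_of_isStarProjection {Y : Type*} [Fintype Y] {μ : Y → Mat n}
    (hproj : ∀ y, IsStarProjection (μ y)) (horth : ∀ y y', y ≠ y' → μ y * μ y' = 0)
    (hsum : ∑ y, μ y = 1) : IsPVM μ := by
  have hherm : ∀ y, (μ y).IsHermitian := fun y => (hproj y).isSelfAdjoint
  refine ⟨⟨fun y => ?_, hsum⟩, fun y => ⟨hherm y, (hproj y).isIdempotentElem⟩, horth⟩
  have hP : μ y = (μ y)ᴴ * μ y := by rw [(hherm y).eq, (hproj y).isIdempotentElem.eq]
  rw [hP]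
  exact posSemidef_conjTranspose_mul_self _

lemma IsPVM.map {Y : Type*} [Fintype Y] {μ : Y → Mat n} (hμ : IsPVM μ)
    {F : Type*} [FunLike F (Mat n) (Mat n)] [RingHomClass F (Mat n) (Mat n)]
    [StarHomClass F (Mat n) (Mat n)] (φ : F) : IsPVM fun y => φ (μ y) := by
  obtain ⟨⟨-, hsum⟩, hproj, horth⟩ := hμ
  refine isPVM_of_isStarProjection (fun y => ?_) (fun y y' hyy' => ?_) ?_
  · exact (isStarProjection_iff'.mpr ⟨(hproj y).2, (hproj y).1⟩).map φ
  · rw [← map_mul, horth y y' hyy', map_zero]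
  · rw [← map_sum, hsum, map_one]

lemma isPVM_single_one : IsPVM fun i : Fin n => single i i (1 : ℂ) := by
  refine isPVM_of_isStarProjection (fun i => ?_) (fun i j hij => ?_) sum_single_one
  · exact isStarProjection_iff'.mpr
      ⟨by rw [single_mul_single_same, mul_one],
        by rw [star_eq_conjTranspose, conjTranspose_single, star_one]⟩
  · exact single_mul_single_of_ne (h := hij) ..

lemma Matrix.IsHermitian.eq_sum_eigenvalues_smul {A : Mat n} (hA : A.IsHermitian) :
    A = ∑ i, hA.eigenvalues i •
      conjStarAlgAut ℝ (Mat n) hA.eigenvectorUnitary (single i i 1) := by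
  have hdiag : diagonal (RCLike.ofReal ∘ hA.eigenvalues) =
      ∑ i, hA.eigenvalues i • single i i (1 : ℂ) := by
    simp [smul_single, ← sum_single_eq_diagonal]
  conv_lhs => rw [hA.spectral_theorem, hdiag]
  simp only [conjStarAlgAut_apply, map_sum, Matrix.mul_smul, Matrix.smul_mul]

lemma Matrix.IsHermitian.exists_isPVM_eq_sum_smul {A : Mat n} (hA : A.IsHermitian) :
    ∃ (c : Fin n → ℝ) (P : Fin n → Mat n), IsPVM P ∧ A = ∑ i, c i • P i :=
  ⟨hA.eigenvalues, _, isPVM_single_one.map (conjStarAlgAut ℝ (Mat n) hA.eigenvectorUnitary),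
    hA.eq_sum_eigenvalues_smul⟩

end

/-- projective quantum scores can express all finite quantum
scores. -/
theorem projective_expressive {n : ℕ} {Y : Type*} [Fintype Y]
    (s : Mat n → Y → ℝ) (μ : Mat n → Y → Mat n)
    (hμ : ∀ ρ' ∈ Dens n, IsPOVM (μ ρ')) :
    ∃ (m : ℕ) (s' : Mat n → Fin m → ℝ) (μ' : Mat n → Fin m → Mat n),
      (∀ ρ' ∈ Dens n, IsPVM (μ' ρ')) ∧
      ∀ ρ' ∈ Dens n, ∀ ρ ∈ Dens n,
        expScoreR s' μ' ρ' ρ = expScoreR s μ ρ' ρ := by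
  have hdecomp : ∀ ρ', ∃ (c : Fin n → ℝ) (P : Fin n → Mat n), ρ' ∈ Dens n →
      IsPVM P ∧ ∑ y, s ρ' y • μ ρ' y = ∑ i, c i • P i := by
    intro ρ'
    by_cases hρ' : ρ' ∈ Dens n
    · obtain ⟨c, P, hP, hA⟩ := ((hμ ρ' hρ').isHermitian_sum_smul (s ρ')).exists_isPVM_eq_sum_smul
      exact ⟨c, P, fun _ => ⟨hP, hA⟩⟩
    · exact ⟨0, 0, fun h => absurd h hρ'⟩
  choose s' μ' hs'μ' using hdecomp
  refine ⟨n, s', μ', fun ρ' hρ' => (hs'μ' ρ' hρ').1, fun ρ' hρ' ρ _ => ?_⟩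
  rw [expScoreR_eq_hip, expScoreR_eq_hip, (hs'μ' ρ' hρ').2]
end

section
/- Let F : Dens(n) → ℝ be convex and for each ρ ∈ Dens(n) let d_ρ be a Hermitian matrix that is a subgradient of F at ρ. Then there exists a finite quantum score S (which is truthful, and which may be taken projective) such that S(ρ'; ρ) = F(ρ') + ⟨d_{ρ'}, ρ − ρ'⟩ for all ρ, ρ' ∈ Dens(n). -/
open Matrix BigOperators ComplexOrder

noncomputable section
namespace QAux
variable {n : ℕ}

lemma hip_smul_left (r : ℝ) (A B : Mat n) : hip ((r:ℂ) • A) B = r * hip A B := by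
  simp [hip, smul_mul_assoc]

lemma hip_sum_left {ι : Type*} (s : Finset ι) (A : ι → Mat n) (B : Mat n) :
    hip (∑ i ∈ s, A i) B = ∑ i ∈ s, hip (A i) B := by
  simp [hip, Finset.sum_mul, trace_sum, Complex.re_sum]

lemma hip_sub_right (A B C : Mat n) : hip A (B - C) = hip A B - hip A C := by
  simp [hip, mul_sub]

lemma hip_one_left (B : Mat n) : hip 1 B = B.trace.re := by simp [hip]

lemma hip_zero_right (A : Mat n) : hip A 0 = 0 := by simp [hip]

def eDiag (i : Fin n) : Mat n := Matrix.diagonal (fun j => if j = i then (1:ℂ) else 0)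

lemma eDiag_mul (i j : Fin n) : eDiag i * eDiag j = if i = j then eDiag i else 0 := by
  ext a b
  by_cases h : i = j <;>
    by_cases hab : a = b <;>
      by_cases hai : a = i <;>
        simp_all [eDiag, Matrix.diagonal_apply]

lemma eDiag_star (i : Fin n) : star (eDiag i) = eDiag i := by
  ext a b
  by_cases hab : a = b <;> by_cases hba : b = a <;>
    simp_all [eDiag, Matrix.star_eq_conjTranspose, Matrix.conjTranspose_apply,
      Matrix.diagonal_apply, apply_ite (starRingEnd ℂ)]

lemma sum_eDiag : ∑ i, eDiag (n := n) i = 1 := by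
  ext j k
  rw [Matrix.sum_apply]
  by_cases h : j = k <;>
    simp [eDiag, Matrix.diagonal_apply, Matrix.one_apply, h]

lemma sum_smul_eDiag (f : Fin n → ℝ) :
    ∑ i, (f i : ℂ) • eDiag i = Matrix.diagonal (RCLike.ofReal ∘ f) := by
  ext j k
  rw [Matrix.sum_apply]
  by_cases h : j = k <;>
    simp [eDiag, Matrix.diagonal_apply, h, mul_ite]

def specProj (A : Mat n) (i : Fin n) : Mat n :=
  if hA : A.IsHermitian then
    (hA.eigenvectorUnitary : Mat n) * eDiag i * star (hA.eigenvectorUnitary : Mat n)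
  else 0

lemma specProj_rep (A : Mat n) (hA : A.IsHermitian) :
    ∃ U : Mat n, star U * U = 1 ∧ U * star U = 1 ∧
      (∀ i, specProj A i = U * eDiag i * star U) ∧
      U * Matrix.diagonal (RCLike.ofReal ∘ hA.eigenvalues) * star U = A := by
  refine ⟨(hA.eigenvectorUnitary : Mat n),
    (Matrix.mem_unitaryGroup_iff').mp hA.eigenvectorUnitary.2,
    (Matrix.mem_unitaryGroup_iff).mp hA.eigenvectorUnitary.2,
    fun i => by simp [specProj, hA], (hA.spectral_theorem).symm⟩

lemma specProj_mul (A : Mat n) (hA : A.IsHermitian) (i j : Fin n) :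
    specProj A i * specProj A j = if i = j then specProj A i else 0 := by
  obtain ⟨U, hU1, hU2, hP, hS⟩ := specProj_rep A hA
  rw [hP, hP]
  rw [show U * eDiag i * star U * (U * eDiag j * star U)
      = U * (eDiag i * (star U * U) * eDiag j) * star U by noncomm_ring,
    hU1, mul_one, eDiag_mul]
  split_ifs with h
  · rfl
  · simp

lemma specProj_posSemidef (A : Mat n) (hA : A.IsHermitian) (i : Fin n) :
    (specProj A i).PosSemidef := by
  obtain ⟨U, hU1, hU2, hP, hS⟩ := specProj_rep A hA
  have h1 : star (eDiag i * star U) = U * eDiag i := by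
    rw [StarMul.star_mul, star_star, eDiag_star]
  have key : specProj A i = star (eDiag i * star U) * (eDiag i * star U) := by
    rw [h1, hP i,
      show U * eDiag i * (eDiag i * star U) = U * (eDiag i * eDiag i) * star U by noncomm_ring,
      eDiag_mul, if_pos rfl]
  rw [key, Matrix.star_eq_conjTranspose]
  exact Matrix.posSemidef_conjTranspose_mul_self _

lemma specProj_isHermitian (A : Mat n) (hA : A.IsHermitian) (i : Fin n) :
    (specProj A i).IsHermitian := (specProj_posSemidef A hA i).1

lemma sum_specProj (A : Mat n) (hA : A.IsHermitian) :
    ∑ i, specProj A i = 1 := by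
  obtain ⟨U, hU1, hU2, hP, hS⟩ := specProj_rep A hA
  have : ∑ i, specProj A i = U * (∑ i, eDiag i) * star U := by
    rw [Finset.mul_sum, Finset.sum_mul]
    exact Finset.sum_congr rfl fun i _ => hP i
  rw [this, sum_eDiag, mul_one, hU2]

lemma sum_eigen_smul_specProj (A : Mat n) (hA : A.IsHermitian) :
    ∑ i, (hA.eigenvalues i : ℂ) • specProj A i = A := by
  obtain ⟨U, hU1, hU2, hP, hS⟩ := specProj_rep A hA
  have h1 : ∑ i, (hA.eigenvalues i : ℂ) • specProj A i
      = U * (∑ i, (hA.eigenvalues i : ℂ) • eDiag i) * star U := by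
    rw [Finset.mul_sum, Finset.sum_mul]
    refine Finset.sum_congr rfl fun i _ => ?_
    rw [hP i, mul_smul_comm, smul_mul_assoc]
  rw [h1, sum_smul_eDiag]
  exact hS

end QAux
end


/-- any convex function with a selection of Hermitian subgradients
arises from a (projective, truthful) finite quantum score. -/
theorem score_for_any_F_dF {n : ℕ} (F : Mat n → ℝ) (d : Mat n → Mat n)
    (hF : ConvexOn ℝ (Dens n) F)
    (hd : ∀ ρ ∈ Dens n, (d ρ).IsHermitian ∧ IsQSubgrad F ρ (d ρ)) :
    ∃ (m : ℕ) (s : Mat n → Fin m → ℝ) (μ : Mat n → Fin m → Mat n),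
      (∀ ρ' ∈ Dens n, IsPVM (μ ρ')) ∧ Truthful s μ ∧
      ∀ ρ' ∈ Dens n, ∀ ρ ∈ Dens n,
        expScoreR s μ ρ' ρ = F ρ' + hip (d ρ') (ρ - ρ') := by
  classical
  refine ⟨n,
    fun ρ' i => if h : ρ' ∈ Dens n then
      (hd ρ' h).1.eigenvalues i + (F ρ' - hip (d ρ') ρ') else 0,
    fun ρ' => QAux.specProj (d ρ'), ?_, ?_, ?_⟩
  case _ =>
    intro ρ' h'
    have hA := (hd ρ' h').1
    refine ⟨⟨fun y => QAux.specProj_posSemidef _ hA y, QAux.sum_specProj _ hA⟩,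
      fun y => ⟨QAux.specProj_isHermitian _ hA y, ?_⟩, fun y y' hyy => ?_⟩
    · rw [QAux.specProj_mul _ hA, if_pos rfl]
    · rw [QAux.specProj_mul _ hA, if_neg hyy]
  all_goals {
    have key : ∀ ρ' ∈ Dens n, ∀ ρ ∈ Dens n,
        expScoreR
          (fun ρ' i => if h : ρ' ∈ Dens n then
            (hd ρ' h).1.eigenvalues i + (F ρ' - hip (d ρ') ρ') else 0)
          (fun ρ' => QAux.specProj (d ρ')) ρ' ρ
        = F ρ' + hip (d ρ') (ρ - ρ') := by
      intro ρ' h' ρ hρ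
      have hA := (hd ρ' h').1
      set c := F ρ' - hip (d ρ') ρ' with hc
      have e1 : expScoreR
          (fun ρ' i => if h : ρ' ∈ Dens n then
            (hd ρ' h).1.eigenvalues i + (F ρ' - hip (d ρ') ρ') else 0)
          (fun ρ' => QAux.specProj (d ρ')) ρ' ρ
          = ∑ y, (hip ((hA.eigenvalues y : ℂ) • QAux.specProj (d ρ') y) ρ
              + hip (QAux.specProj (d ρ') y) ρ * c) := by
        unfold expScoreR
        refine Finset.sum_congr rfl fun y _ => ?_
        simp only [dif_pos h', QAux.hip_smul_left]
        ring
      rw [e1, Finset.sum_add_distrib, ← QAux.hip_sum_left, ← Finset.sum_mul,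
        ← QAux.hip_sum_left, QAux.sum_eigen_smul_specProj _ hA,
        QAux.sum_specProj _ hA, QAux.hip_one_left, hρ.2, QAux.hip_sub_right]
      simp [hc]
      ring
    first
    | exact key
    | { intro ρ hρ ρ' hρ'
        rw [key ρ' hρ' ρ hρ, key ρ hρ ρ hρ, sub_self, QAux.hip_zero_right, add_zero]
        exact (hd ρ' hρ').2 ρ hρ } }
end

section
/- Let ŝ : Δ_n × {1,…,n} → ℝ be a permutation-invariant classical scoring rule and let ρ ∈ Dens(n). If x_1,…,x_n and z_1,…,z_n are two spectral decompositions of ρ (both with eigenvalues in non-increasing order λ(ρ)), then Σ_{y=1}^n ŝ(λ(ρ), y) x_y x_y* = Σ_{y=1}^n ŝ(λ(ρ), y) z_y z_y*. In particular, the spectral score satisfies S[ŝ](ρ; ρ) = ŝ(λ(ρ); λ(ρ)). -/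
open Matrix BigOperators ComplexOrder

/-!
Let `X`, `Z` be the unitaries whose columns are the two decompositions and `D = diag λ(ρ)`.
From `X D Xᴴ = ρ = Z D Zᴴ`, the unitary `Xᴴ Z` commutes with `D`, so its entry `(i, j)` vanishes
unless `λ_i = λ_j`. Permutation invariance (for the transposition of `i` and `j`) makes
`ŝ(λ, ·)` constant on such indices, so `Xᴴ Z` commutes with `diag ŝ(λ, ·)` as well, which is the
first claim. For the second, `x_y` is an eigenvector of `ρ` for `λ_y`, so `Tr(x_y x_y* ρ) = λ_y`.
-/

theorem conj_eq_conj_iff_commute {M : Type*} [Monoid M] [StarMul M] {u v : M}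
    (hu : u ∈ unitary M) (hv : v ∈ unitary M) (d : M) :
    u * d * star u = v * d * star v ↔ Commute (star u * v) d := by
  rw [commute_unitary_iff_star_right_conjugate (Submonoid.mul_mem _ (Unitary.star_mem hu) hv)]
  set w := star u * v
  have hv' : v * d * star v = u * (w * d * star w) * star u := by
    simp only [w, star_mul, star_star, ← mul_assoc, Unitary.mul_star_self_of_mem hu, one_mul]
    rw [mul_assoc _ u, Unitary.mul_star_self_of_mem hu, mul_one]
  lift u to unitary M using hu
  rw [hv', ← Unitary.coe_star, Unitary.mul_left_inj, mul_assoc, mul_assoc, Unitary.mul_right_inj,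
    eq_comm]

theorem Matrix.commute_diagonal_of_commute_diagonal {n R : Type*} [Fintype n] [DecidableEq n]
    [CommRing R] [NoZeroDivisors R] {d g : n → R} {A : Matrix n n R}
    (h : Commute A (diagonal d)) (hg : ∀ i j, d i = d j → g i = g j) :
    Commute A (diagonal g) := by
  ext i j
  have hij := congr_fun₂ h i j
  simp only [mul_diagonal, diagonal_mul] at hij ⊢
  rcases eq_or_ne (A i j) 0 with h0 | h0
  · simp [h0]
  · rw [hg i j (mul_left_cancel₀ h0 (hij.trans (mul_comm _ _))).symm, mul_comm]

theorem Matrix.sum_smul_vecMulVec_star {ι n α : Type*} [Fintype ι] [DecidableEq ι]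
    [CommSemiring α] [StarRing α] (d : ι → α) (w : ι → n → α) :
    ∑ y, d y • vecMulVec (w y) (star (w y)) = (of w)ᵀ * diagonal d * (of w)ᵀᴴ := by
  ext a b
  simp only [sum_apply, smul_apply, vecMulVec_apply, Pi.star_apply, smul_eq_mul, mul_apply,
    transpose_apply, of_apply, diagonal_apply, mul_ite, mul_zero, Finset.sum_ite_eq',
    Finset.mem_univ, if_true, conjTranspose_apply]
  exact Finset.sum_congr rfl fun _ _ => by ring

theorem Matrix.conj_diagonal_eq_of_conj_diagonal_eq {n R : Type*} [Fintype n] [DecidableEq n]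
    [CommRing R] [StarRing R] [NoZeroDivisors R] {U V : Matrix n n R}
    (hU : U ∈ unitaryGroup n R) (hV : V ∈ unitaryGroup n R) {d g : n → R}
    (h : U * diagonal d * star U = V * diagonal d * star V)
    (hg : ∀ i j, d i = d j → g i = g j) :
    U * diagonal g * star U = V * diagonal g * star V :=
  (conj_eq_conj_iff_commute hU hV _).mpr <|
    commute_diagonal_of_commute_diagonal ((conj_eq_conj_iff_commute hU hV _).mp h) hg

theorem PermInv.apply_eq_of_apply_eq {n : ℕ} {s : (Fin n → ℝ) → Fin n → ℝ} (hs : PermInv s)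
    {p : Fin n → ℝ} {i j : Fin n} (h : p i = p j) : s p i = s p j := by
  have hp : p ∘ Equiv.swap i j = p := by
    rw [Equiv.comp_swap_eq_update, h, Function.update_eq_self, ← h, Function.update_eq_self]
  simpa [hp] using hs (Equiv.swap i j) p i

namespace ONFam

variable {n : ℕ} {x : Fin n → Fin n → ℂ}

theorem star_dotProduct (hx : ONFam x) (i j : Fin n) :
    star (x i) ⬝ᵥ x j = if i = j then 1 else 0 :=
  hx i j

theorem transpose_of_mem_unitaryGroup (hx : ONFam x) : (of x)ᵀ ∈ unitaryGroup (Fin n) ℂ := by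
  rw [mem_unitaryGroup_iff']
  ext i j
  simpa [mul_apply, one_apply] using hx i j

theorem sum_smul_outer_mulVec (hx : ONFam x) (d : Fin n → ℂ) (y : Fin n) :
    (∑ k, d k • outer (x k)) *ᵥ x y = d y • x y := by
  simp [sum_mulVec, smul_mulVec, outer, vecMulVec_mulVec, hx.star_dotProduct]

theorem hip_outer_sum_smul (hx : ONFam x) (d : Fin n → ℝ) (y : Fin n) :
    hip (outer (x y)) (∑ k, (d k : ℂ) • outer (x k)) = d y := by
  rw [hip, trace_mul_comm, outer, mul_vecMulVec, trace_vecMulVec, hx.sum_smul_outer_mulVec,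
    smul_dotProduct, dotProduct_comm, hx.star_dotProduct, if_pos rfl]
  simp

end ONFam

theorem spectral_form_general {n : ℕ} (sh : (Fin n → ℝ) → Fin n → ℝ) (hperm : PermInv sh)
    (ρ : Mat n) (x z : Fin n → Fin n → ℂ) (hx : IsSpecDecomp ρ x) (hz : IsSpecDecomp ρ z) :
    (∑ y, (sh (eigs ρ) y : ℂ) • outer (x y) =
      ∑ y, (sh (eigs ρ) y : ℂ) • outer (z y)) ∧
    specExp sh x ρ ρ = cExp sh (eigs ρ) (eigs ρ) := by
  obtain ⟨hxon, hxρ⟩ := hx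
  obtain ⟨hzon, hzρ⟩ := hz
  refine ⟨?_, Finset.sum_congr rfl fun y _ => ?_⟩
  · simp only [outer, sum_smul_vecMulVec_star, ← star_eq_conjTranspose] at hxρ hzρ ⊢
    refine conj_diagonal_eq_of_conj_diagonal_eq hxon.transpose_of_mem_unitaryGroup
      hzon.transpose_of_mem_unitaryGroup (hxρ.symm.trans hzρ) fun i j h => ?_
    exact congrArg _ (hperm.apply_eq_of_apply_eq (Complex.ofReal_injective h))
  · rw [← hxon.hip_outer_sum_smul (eigs ρ) y, ← hxρ]

/-- the spectral score is independent of the choice of spectral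
decomposition, and `S[ŝ](ρ;ρ) = ŝ(λ(ρ);λ(ρ))`. -/
theorem spectral_form {n : ℕ} (sh : (Fin n → ℝ) → Fin n → ℝ) (hperm : PermInv sh)
    (ρ : Mat n) (hρ : ρ ∈ Dens n)
    (x z : Fin n → Fin n → ℂ) (hx : IsSpecDecomp ρ x) (hz : IsSpecDecomp ρ z) :
    (∑ y, (sh (eigs ρ) y : ℂ) • outer (x y) =
      ∑ y, (sh (eigs ρ) y : ℂ) • outer (z y)) ∧
    specExp sh x ρ ρ = cExp sh (eigs ρ) (eigs ρ) :=
  spectral_form_general sh hperm ρ x z hx hz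
end

section
/- Let f : Δ_n → ℝ be permutation-invariant and define F : Dens(n) → ℝ by F(ρ) = f(λ(ρ)). Then F is convex on Dens(n) if and only if f is convex on Δ_n, and F is strictly convex on Dens(n) if and only if f is strictly convex on Δ_n. -/
open Matrix BigOperators ComplexOrder

/-!
Diagonalize `m = a • ρ + b • σ` by a unitary `U`. In the basis given by the columns of `U` the
diagonal of `m` is its spectrum, and by linearity it is the combination `a • x + b • y` of the
diagonals `x`, `y` of `ρ` and `σ`. By Schur's theorem the diagonal of a Hermitian matrix in any
orthonormal basis is the image of its spectrum under a doubly stochastic (indeed unistochastic)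
matrix, hence by Birkhoff a convex combination of permutations of the spectrum; so a convex
permutation-invariant `f` satisfies `f x ≤ f (λ ρ)`, and convexity of `f` at `a • x + b • y`
gives that of `F`.

For strict convexity, if `x = y` and both Schur bounds are equalities, strict convexity forces
`x` to be a permutation of `λ ρ`. Then the diagonal carries the whole Frobenius norm of `U⁻¹ ρ U`,
which is therefore the diagonal matrix `x`; likewise for `σ`, so `ρ = σ`.

Conversely, `f` is `F` composed with the linear injection `p ↦ diagonal p`, since the spectrum
of a real diagonal matrix is a permutation of its diagonal, and the simplex is the preimage of
`Dens n` under this injection.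
-/

open Finset

def PermInvariant {ι β : Type*} (f : (ι → ℝ) → β) : Prop :=
  ∀ (π : Equiv.Perm ι) (p : ι → ℝ), f (p ∘ π) = f p

theorem Fintype.exists_perm_comp_eq_of_map_univ_eq {ι α : Type*} [Fintype ι] [DecidableEq α]
    {f g : ι → α} (h : univ.val.map f = univ.val.map g) : ∃ σ : Equiv.Perm ι, g ∘ σ = f := by
  have hcard (c : α) : Fintype.card {i // f i = c} = Fintype.card {i // g i = c} := by
    simpa [Fintype.card_subtype, Multiset.count_map, eq_comm, Finset.card_def] using
      congrArg (Multiset.count c) h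
  exact ⟨Equiv.ofFiberEquiv fun c => Fintype.equivOfCardEq (hcard c),
    funext (Equiv.ofFiberEquiv_map _)⟩

theorem StrictConvexOn.comp_linearMap {𝕜 E F β : Type*} [Semiring 𝕜] [PartialOrder 𝕜]
    [AddCommMonoid E] [AddCommMonoid F] [AddCommMonoid β] [PartialOrder β] [Module 𝕜 E]
    [Module 𝕜 F] [SMul 𝕜 β] {f : F → β} {s : Set F} (hf : StrictConvexOn 𝕜 s f)
    {g : E →ₗ[𝕜] F} (hg : Function.Injective g) : StrictConvexOn 𝕜 (g ⁻¹' s) (f ∘ g) :=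
  ⟨hf.1.linear_preimage g, fun x hx y hy hxy a b ha hb hab => by
    simpa only [Function.comp_apply, map_add, map_smul] using hf.2 hx hy (hg.ne hxy) ha hb hab⟩

section DoublyStochastic

variable {ι : Type*} [Fintype ι]

theorem comp_perm_mem_stdSimplex {p : ι → ℝ} (hp : p ∈ stdSimplex ℝ ι) (π : Equiv.Perm ι) :
    p ∘ π ∈ stdSimplex ℝ ι :=
  ⟨fun i => hp.1 (π i), (Equiv.sum_comp π p).trans hp.2⟩

variable [DecidableEq ι] {M : Matrix ι ι ℝ}

theorem mulVec_mem_stdSimplex (hM : M ∈ doublyStochastic ℝ ι) {p : ι → ℝ}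
    (hp : p ∈ stdSimplex ℝ ι) : M *ᵥ p ∈ stdSimplex ℝ ι :=
  ⟨fun _ => sum_nonneg fun j _ => mul_nonneg (nonneg_of_mem_doublyStochastic hM) (hp.1 j),
    (sum_mulVec_of_mem_doublyStochastic hM).trans hp.2⟩

theorem exists_mulVec_eq_sum_perm_of_mem_doublyStochastic (hM : M ∈ doublyStochastic ℝ ι) :
    ∃ w : Equiv.Perm ι → ℝ, (∀ π, 0 ≤ w π) ∧ ∑ π, w π = 1 ∧
      ∀ v : ι → ℝ, M *ᵥ v = ∑ π, w π • (v ∘ π) := by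
  obtain ⟨w, hw0, hw1, rfl⟩ := exists_eq_sum_perm_of_mem_doublyStochastic hM
  exact ⟨w, hw0, hw1, fun v => by simp [sum_mulVec, smul_mulVec, permMatrix_mulVec]⟩

variable {s : Set (ι → ℝ)} {f : (ι → ℝ) → ℝ} {v : ι → ℝ}

theorem ConvexOn.map_mulVec_le (hf : ConvexOn ℝ s f) (hperm : PermInvariant f)
    (hv : ∀ π : Equiv.Perm ι, v ∘ π ∈ s) (hM : M ∈ doublyStochastic ℝ ι) :
    f (M *ᵥ v) ≤ f v := by
  obtain ⟨w, hw0, hw1, hMv⟩ := exists_mulVec_eq_sum_perm_of_mem_doublyStochastic hM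
  calc f (M *ᵥ v) ≤ ∑ π, w π • f (v ∘ π) := by
        rw [hMv]; exact hf.map_sum_le (fun π _ => hw0 π) hw1 fun π _ => hv π
    _ = f v := by simp only [fun π => hperm π v, ← sum_smul, hw1, one_smul]

theorem StrictConvexOn.exists_perm_of_map_mulVec_eq (hf : StrictConvexOn ℝ s f)
    (hperm : PermInvariant f) (hv : ∀ π : Equiv.Perm ι, v ∘ π ∈ s)
    (hM : M ∈ doublyStochastic ℝ ι) (heq : f (M *ᵥ v) = f v) :
    ∃ π : Equiv.Perm ι, M *ᵥ v = v ∘ π := by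
  obtain ⟨w, hw0, hw1, hMv⟩ := exists_mulVec_eq_sum_perm_of_mem_doublyStochastic hM
  have hjensen : f (∑ π, w π • (v ∘ π)) = ∑ π, w π • f (v ∘ π) := by
    simp only [← hMv, heq, fun π => hperm π v, ← sum_smul, hw1, one_smul]
  obtain ⟨π, -, hπ⟩ := exists_ne_zero_of_sum_ne_zero (hw1.symm ▸ one_ne_zero : ∑ π, w π ≠ 0)
  exact ⟨π, hMv v ▸ ((hf.map_sum_eq_iff' (fun π _ => hw0 π) hw1 fun π _ => hv π).mp hjensen π
    (mem_univ π) hπ).symm⟩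

end DoublyStochastic

namespace Matrix

section RealDiagonal

variable {ι : Type*} [DecidableEq ι]

def realDiagonal : (ι → ℝ) →ₗ[ℝ] Matrix ι ι ℂ where
  toFun p := diagonal fun i => (p i : ℂ)
  map_add' p q := by simp [diagonal_add]
  map_smul' c p := by ext i j; by_cases h : i = j <;> simp [h]

@[simp]
theorem realDiagonal_apply (p : ι → ℝ) : realDiagonal p = diagonal fun i => (p i : ℂ) := rfl

theorem realDiagonal_injective : Function.Injective (realDiagonal : (ι → ℝ) → Matrix ι ι ℂ) :=
  fun p q h => funext fun i => by simpa using congrFun₂ h i i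

theorem isHermitian_realDiagonal (p : ι → ℝ) : (realDiagonal p).IsHermitian :=
  isHermitian_diagonal_iff.mpr fun i => by simp [IsSelfAdjoint]

theorem exists_perm_eigenvalues_realDiagonal [Fintype ι] (p : ι → ℝ) :
    ∃ π : Equiv.Perm ι, (isHermitian_realDiagonal p).eigenvalues ∘ π = p := by
  apply Fintype.exists_perm_comp_eq_of_map_univ_eq
  apply Multiset.map_injective Complex.ofReal_injective
  have h := (isHermitian_realDiagonal p).roots_charpoly_eq_eigenvalues
  simp only [realDiagonal_apply, charpoly_diagonal] at h
  rw [Polynomial.roots_prod] at h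
  · simpa [Multiset.map_map] using h
  · simp [Finset.prod_ne_zero_iff, Polynomial.X_sub_C_ne_zero]

end RealDiagonal

section Unitary

variable {ι : Type*} [Fintype ι]

theorem re_trace_mul_conjTranspose (A : Matrix ι ι ℂ) :
    (A * Aᴴ).trace.re = ∑ i, ∑ j, Complex.normSq (A i j) := by
  simp [trace, mul_apply, Complex.mul_conj, Complex.re_sum]

variable [DecidableEq ι] {W : Matrix ι ι ℂ}

theorem normSq_mem_doublyStochastic (hW : W ∈ unitaryGroup ι ℂ) :
    of (fun i j => Complex.normSq (W i j)) ∈ doublyStochastic ℝ ι := by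
  refine mem_doublyStochastic_iff_sum.mpr
    ⟨fun i j => Complex.normSq_nonneg _, fun i => ?_, fun j => ?_⟩
  · have h := congrFun₂ (mem_unitaryGroup_iff.mp hW) i i
    simp only [mul_apply, star_apply, RCLike.star_def, Complex.mul_conj, one_apply_eq] at h
    exact_mod_cast h
  · have h := congrFun₂ (mem_unitaryGroup_iff'.mp hW) j j
    simp only [mul_apply, star_apply, RCLike.star_def, mul_comm, Complex.mul_conj,
      one_apply_eq] at h
    exact_mod_cast h

theorem mul_realDiagonal_mul_star_apply_self (W : Matrix ι ι ℂ) (d : ι → ℝ) (i : ι) :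
    (W * realDiagonal d * star W) i i = ((of fun i j => Complex.normSq (W i j)) *ᵥ d) i := by
  rw [mul_apply]
  simp only [realDiagonal_apply, mul_diagonal, star_apply, RCLike.star_def, mulVec, dotProduct,
    of_apply]
  push_cast
  refine sum_congr rfl fun j _ => ?_
  rw [← Complex.mul_conj]; ring

theorem sum_normSq_mul_realDiagonal_mul_star (hW : W ∈ unitaryGroup ι ℂ) (d : ι → ℝ) :
    ∑ i, ∑ j, Complex.normSq ((W * realDiagonal d * star W) i j) = ∑ i, d i ^ 2 := by
  set D := realDiagonal d with hD
  have hWW : star W * W = 1 := mem_unitaryGroup_iff'.mp hW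
  have hconj : (W * D * star W) * (W * D * star W)ᴴ = W * (D * Dᴴ) * star W := by
    simp only [← star_eq_conjTranspose, star_mul, star_star, mul_assoc]
    rw [← mul_assoc (star W) W, hWW, one_mul]
  rw [← re_trace_mul_conjTranspose, hconj, trace_mul_cycle, hWW, one_mul, hD, realDiagonal_apply,
    diagonal_conjTranspose, diagonal_mul_diagonal, trace_diagonal, Complex.re_sum]
  refine sum_congr rfl fun i _ => ?_
  simp [sq]

theorem isDiag_of_sum_normSq_le {A : Matrix ι ι ℂ}
    (h : ∑ i, ∑ j, Complex.normSq (A i j) ≤ ∑ i, Complex.normSq (A i i)) : A.IsDiag := by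
  intro i j hij
  have hdiag (i : ι) : Complex.normSq (A i i) ≤ ∑ j, Complex.normSq (A i j) :=
    single_le_sum (fun j _ => Complex.normSq_nonneg _) (mem_univ i)
  have hrow : ∑ j, Complex.normSq (A i j) = Complex.normSq (A i i) :=
    ((sum_eq_sum_iff_of_le fun i _ => hdiag i).mp (le_antisymm (sum_le_sum fun i _ => hdiag i) h)
      i (mem_univ i)).symm
  have hpair := sum_le_sum_of_subset_of_nonneg (subset_univ {i, j})
    (fun k _ _ => Complex.normSq_nonneg (A i k))
  rw [sum_pair hij] at hpair
  exact Complex.normSq_eq_zero.mp (le_antisymm (by linarith) (Complex.normSq_nonneg _))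

theorem unitary_conj_injective (hW : W ∈ unitaryGroup ι ℂ) :
    Function.Injective fun ρ : Matrix ι ι ℂ => star W * ρ * W := by
  intro ρ σ h
  have hWW : W * star W = 1 := mem_unitaryGroup_iff.mp hW
  have hcancel (X : Matrix ι ι ℂ) : W * (star W * X * W) * star W = X := by
    simp only [← mul_assoc, hWW, one_mul]
    rw [mul_assoc, hWW, mul_one]
  simpa only [hcancel] using congrArg (fun X => W * X * star W) h

end Unitary

section ConjDiag

variable {ι : Type*} [Fintype ι] [DecidableEq ι]

/-- The diagonal of `ρ` in the orthonormal basis formed by the columns of `U` (for Hermitian `ρ`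
taking real parts loses nothing). -/
def conjDiag (U : Matrix ι ι ℂ) : Matrix ι ι ℂ →ₗ[ℝ] ι → ℝ where
  toFun ρ i := ((star U * ρ * U) i i).re
  map_add' ρ σ := by ext i; simp [mul_add, add_mul]
  map_smul' c ρ := by ext i; simp

variable {ρ U : Matrix ι ι ℂ}

theorem PosSemidef.eigenvalues_mem_stdSimplex (hρ : ρ.PosSemidef) (htr : ρ.trace = 1) :
    hρ.isHermitian.eigenvalues ∈ stdSimplex ℝ ι := by
  refine ⟨hρ.eigenvalues_nonneg, ?_⟩
  have h := hρ.isHermitian.trace_eq_sum_eigenvalues.symm.trans htr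
  rw [← Complex.ofReal_eq_one]
  convert h using 1
  simp

theorem IsHermitian.conjDiag_eigenvectorUnitary (hρ : ρ.IsHermitian) :
    conjDiag (hρ.eigenvectorUnitary : Matrix ι ι ℂ) ρ = hρ.eigenvalues := by
  ext i
  have h := hρ.conjStarAlgAut_star_eigenvectorUnitary
  simp only [Unitary.conjStarAlgAut_apply, Unitary.coe_star, star_star] at h
  simp [conjDiag, h]

theorem IsHermitian.exists_unitary_conj_eq (hρ : ρ.IsHermitian) (hU : U ∈ unitaryGroup ι ℂ) :
    ∃ W ∈ unitaryGroup ι ℂ, star U * ρ * U = W * realDiagonal hρ.eigenvalues * star W := by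
  refine ⟨star U * hρ.eigenvectorUnitary, mul_mem (Unitary.star_mem hU) (SetLike.coe_mem _), ?_⟩
  conv_lhs => rw [hρ.spectral_theorem]
  simp [mul_assoc, star_mul, Function.comp_def]

theorem IsHermitian.exists_conjDiag_eq_mulVec (hρ : ρ.IsHermitian) (hU : U ∈ unitaryGroup ι ℂ) :
    ∃ M ∈ doublyStochastic ℝ ι, conjDiag U ρ = M *ᵥ hρ.eigenvalues := by
  obtain ⟨W, hW, hconj⟩ := hρ.exists_unitary_conj_eq hU
  refine ⟨_, normSq_mem_doublyStochastic hW, funext fun i => ?_⟩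
  simp only [conjDiag, LinearMap.coe_mk, AddHom.coe_mk, hconj,
    mul_realDiagonal_mul_star_apply_self, Complex.ofReal_re]

theorem IsHermitian.conj_eq_realDiagonal_of_conjDiag_eq_comp_perm (hρ : ρ.IsHermitian)
    (hU : U ∈ unitaryGroup ι ℂ) {π : Equiv.Perm ι} (h : conjDiag U ρ = hρ.eigenvalues ∘ π) :
    star U * ρ * U = realDiagonal (conjDiag U ρ) := by
  obtain ⟨W, hW, hconj⟩ := hρ.exists_unitary_conj_eq hU
  have hdiag (i : ι) : (star U * ρ * U) i i = (conjDiag U ρ i : ℂ) := by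
    simp only [conjDiag, LinearMap.coe_mk, AddHom.coe_mk, hconj,
      mul_realDiagonal_mul_star_apply_self, Complex.ofReal_re]
  have hsum : ∑ i, Complex.normSq ((star U * ρ * U) i i) = ∑ i, hρ.eigenvalues i ^ 2 := by
    simp only [hdiag, Complex.normSq_ofReal, h, Function.comp_apply, ← sq]
    exact Equiv.sum_comp π fun i => hρ.eigenvalues i ^ 2
  have hIsDiag : (star U * ρ * U).IsDiag := isDiag_of_sum_normSq_le <| by
    rw [hsum, hconj, sum_normSq_mul_realDiagonal_mul_star hW]
  rw [← hIsDiag.diagonal_diag]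
  exact congrArg diagonal (funext hdiag)

end ConjDiag

end Matrix

section Density

variable {n : ℕ}

theorem convex_Dens : Convex ℝ (Dens n) := by
  intro ρ hρ σ hσ a b ha hb hab
  refine ⟨(hρ.1.smul ha).add (hσ.1.smul hb), ?_⟩
  simp [trace_add, trace_smul, hρ.2, hσ.2, ← Complex.ofReal_add, hab]

theorem preimage_realDiagonal_Dens : realDiagonal ⁻¹' Dens n = stdSimplex ℝ (Fin n) := by
  ext p
  simp [Dens, stdSimplex, trace_diagonal, ← Complex.ofReal_sum]

theorem exists_perm_eigs_eq {ρ : Mat n} (hρ : ρ.IsHermitian) :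
    ∃ π : Equiv.Perm (Fin n), hρ.eigenvalues ∘ π = eigs ρ :=
  ⟨Fin.revPerm.trans (Tuple.sort hρ.eigenvalues), by rw [eigs, dif_pos hρ]; rfl⟩

end Density

section SpectralLift

variable {n : ℕ} {f : (Fin n → ℝ) → ℝ} {ρ U : Mat n}

theorem PermInvariant.apply_eigs (hperm : PermInvariant f) (hρ : ρ.IsHermitian) :
    f (eigs ρ) = f hρ.eigenvalues := by
  obtain ⟨π, hπ⟩ := exists_perm_eigs_eq hρ
  rw [← hπ, hperm]

theorem PermInvariant.apply_eigs_realDiagonal (hperm : PermInvariant f) (p : Fin n → ℝ) :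
    f (eigs (realDiagonal p)) = f p := by
  obtain ⟨π, hπ⟩ := exists_perm_eigenvalues_realDiagonal p
  rw [hperm.apply_eigs (isHermitian_realDiagonal p), ← hperm π, hπ]

theorem PermInvariant.apply_eigs_combo (hperm : PermInvariant f) {ρ σ : Mat n} {a b : ℝ}
    (hm : (a • ρ + b • σ).IsHermitian) :
    f (eigs (a • ρ + b • σ)) =
      f (a • conjDiag hm.eigenvectorUnitary ρ + b • conjDiag hm.eigenvectorUnitary σ) := by
  rw [hperm.apply_eigs hm, ← hm.conjDiag_eigenvectorUnitary, map_add, map_smul, map_smul]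

theorem conjDiag_mem_stdSimplex (hρ : ρ ∈ Dens n) (hU : U ∈ unitaryGroup (Fin n) ℂ) :
    conjDiag U ρ ∈ stdSimplex ℝ (Fin n) := by
  obtain ⟨hpsd, htr⟩ := hρ
  obtain ⟨M, hM, h⟩ := hpsd.isHermitian.exists_conjDiag_eq_mulVec hU
  exact h ▸ mulVec_mem_stdSimplex hM (hpsd.eigenvalues_mem_stdSimplex htr)

theorem ConvexOn.map_conjDiag_le (hf : ConvexOn ℝ (stdSimplex ℝ (Fin n)) f)
    (hperm : PermInvariant f) (hρ : ρ ∈ Dens n) (hU : U ∈ unitaryGroup (Fin n) ℂ) :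
    f (conjDiag U ρ) ≤ f (eigs ρ) := by
  obtain ⟨hpsd, htr⟩ := hρ
  obtain ⟨M, hM, h⟩ := hpsd.isHermitian.exists_conjDiag_eq_mulVec hU
  rw [h, hperm.apply_eigs hpsd.isHermitian]
  exact hf.map_mulVec_le hperm (comp_perm_mem_stdSimplex (hpsd.eigenvalues_mem_stdSimplex htr)) hM

theorem StrictConvexOn.conj_eq_realDiagonal_of_map_conjDiag_eq
    (hf : StrictConvexOn ℝ (stdSimplex ℝ (Fin n)) f) (hperm : PermInvariant f) (hρ : ρ ∈ Dens n)
    (hU : U ∈ unitaryGroup (Fin n) ℂ) (heq : f (conjDiag U ρ) = f (eigs ρ)) :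
    star U * ρ * U = realDiagonal (conjDiag U ρ) := by
  obtain ⟨hpsd, htr⟩ := hρ
  obtain ⟨M, hM, h⟩ := hpsd.isHermitian.exists_conjDiag_eq_mulVec hU
  rw [h, hperm.apply_eigs hpsd.isHermitian] at heq
  obtain ⟨π, hπ⟩ := hf.exists_perm_of_map_mulVec_eq hperm
    (comp_perm_mem_stdSimplex (hpsd.eigenvalues_mem_stdSimplex htr)) hM heq
  exact hpsd.isHermitian.conj_eq_realDiagonal_of_conjDiag_eq_comp_perm hU (h.trans hπ)

theorem ConvexOn.comp_eigs (hf : ConvexOn ℝ (stdSimplex ℝ (Fin n)) f)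
    (hperm : PermInvariant f) : ConvexOn ℝ (Dens n) fun ρ => f (eigs ρ) := by
  refine ⟨convex_Dens, fun ρ hρ σ hσ a b ha hb hab => ?_⟩
  have hm := (convex_Dens hρ hσ ha hb hab).1.isHermitian
  have hU := hm.eigenvectorUnitary.2
  calc f (eigs (a • ρ + b • σ))
      = f (a • conjDiag hm.eigenvectorUnitary ρ + b • conjDiag hm.eigenvectorUnitary σ) :=
        hperm.apply_eigs_combo hm
    _ ≤ a • f (conjDiag hm.eigenvectorUnitary ρ) + b • f (conjDiag hm.eigenvectorUnitary σ) :=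
        hf.2 (conjDiag_mem_stdSimplex hρ hU) (conjDiag_mem_stdSimplex hσ hU) ha hb hab
    _ ≤ a • f (eigs ρ) + b • f (eigs σ) := by
        gcongr
        exacts [hf.map_conjDiag_le hperm hρ hU, hf.map_conjDiag_le hperm hσ hU]

theorem StrictConvexOn.comp_eigs (hf : StrictConvexOn ℝ (stdSimplex ℝ (Fin n)) f)
    (hperm : PermInvariant f) : StrictConvexOn ℝ (Dens n) fun ρ => f (eigs ρ) := by
  refine ⟨convex_Dens, fun ρ hρ σ hσ hne a b ha hb hab => ?_⟩
  have hm := (convex_Dens hρ hσ ha.le hb.le hab).1.isHermitian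
  have hU := hm.eigenvectorUnitary.2
  simp only [hperm.apply_eigs_combo hm, smul_eq_mul]
  set x := conjDiag hm.eigenvectorUnitary ρ
  set y := conjDiag hm.eigenvectorUnitary σ
  have hx : f x ≤ f (eigs ρ) := hf.convexOn.map_conjDiag_le hperm hρ hU
  have hy : f y ≤ f (eigs σ) := hf.convexOn.map_conjDiag_le hperm hσ hU
  rcases eq_or_ne x y with hxy | hxy
  · have hstrict : f x < f (eigs ρ) ∨ f y < f (eigs σ) := by
      by_contra! h
      refine hne (unitary_conj_injective hU ?_)
      simp only
      rw [hf.conj_eq_realDiagonal_of_map_conjDiag_eq hperm hρ hU (le_antisymm hx h.1),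
        hf.conj_eq_realDiagonal_of_map_conjDiag_eq hperm hσ hU (le_antisymm hy h.2)]
      exact congrArg realDiagonal hxy
    rw [← hxy] at hy hstrict ⊢
    calc f (a • x + b • x) = a * f x + b * f x := by
          rw [Convex.combo_self hab, ← add_mul, hab, one_mul]
      _ < a * f (eigs ρ) + b * f (eigs σ) := by
        rcases hstrict with h | h
        · exact add_lt_add_of_lt_of_le (by gcongr) (by gcongr)
        · exact add_lt_add_of_le_of_lt (by gcongr) (by gcongr)
  · calc f (a • x + b • y) < a * f x + b * f y :=
          hf.2 (conjDiag_mem_stdSimplex hρ hU) (conjDiag_mem_stdSimplex hσ hU) hxy ha hb hab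
      _ ≤ a * f (eigs ρ) + b * f (eigs σ) := by gcongr

theorem ConvexOn.of_comp_eigs (hF : ConvexOn ℝ (Dens n) fun ρ => f (eigs ρ))
    (hperm : PermInvariant f) : ConvexOn ℝ (stdSimplex ℝ (Fin n)) f := by
  have h := hF.comp_linearMap realDiagonal
  rwa [preimage_realDiagonal_Dens, Function.comp_def, funext hperm.apply_eigs_realDiagonal] at h

theorem StrictConvexOn.of_comp_eigs (hF : StrictConvexOn ℝ (Dens n) fun ρ => f (eigs ρ))
    (hperm : PermInvariant f) : StrictConvexOn ℝ (stdSimplex ℝ (Fin n)) f := by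
  have h := hF.comp_linearMap realDiagonal_injective
  rwa [preimage_realDiagonal_Dens, Function.comp_def, funext hperm.apply_eigs_realDiagonal] at h

end SpectralLift

/-- the spectral lift of a permutation-invariant function is
(strictly) convex on density matrices iff the function is (strictly) convex
on the simplex. -/
theorem spectral_lift_convexity {n : ℕ} (f : (Fin n → ℝ) → ℝ)
    (hperm : ∀ (π : Equiv.Perm (Fin n)) (p : Fin n → ℝ), f (p ∘ π) = f p) :
    (ConvexOn ℝ (Dens n) (fun ρ => f (eigs ρ)) ↔
      ConvexOn ℝ (stdSimplex ℝ (Fin n)) f) ∧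
    (StrictConvexOn ℝ (Dens n) (fun ρ => f (eigs ρ)) ↔
      StrictConvexOn ℝ (stdSimplex ℝ (Fin n)) f) :=
  ⟨⟨fun hF => hF.of_comp_eigs hperm, fun hf => hf.comp_eigs hperm⟩,
    ⟨fun hF => hF.of_comp_eigs hperm, fun hf => hf.comp_eigs hperm⟩⟩
end
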